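/- One has the bound ∫₀^{2π} ‖A − I‖₂ dθ ≤ (8πp)^{1/2} ( ∫₀^{2π} ‖A^{1/2} − I‖₂² dθ )^{1/2}, where A(θ) = φ_n(z) φ_{n+ℓ}(z)^{-1} ([φ_{n+ℓ}(z)]*)^{-1} [φ_n(z)]* and z = e^{iθ}. -/

import Mathlib

open MeasureTheory Matrix Filter Topology Complex Finset
open scoped ComplexOrder

/-- Entrywise (Bochner) integral of a matrix-valued function against a measure on `ℝ`
(representing a matrix measure on the unit circle via the angle `θ`). -/
noncomputable def matInt {p : ℕ} (μ : Measure ℝ) (f : ℝ → Matrix (Fin p) (Fin p) ℂ) :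
    Matrix (Fin p) (Fin p) ℂ :=
  Matrix.of fun i j => ∫ θ, f θ i j ∂μ

/-- Entrywise integral of a matrix-valued function over `[0, 2π]` with respect to `dθ`. -/
noncomputable def matIntI {p : ℕ} (f : ℝ → Matrix (Fin p) (Fin p) ℂ) :
    Matrix (Fin p) (Fin p) ℂ :=
  Matrix.of fun i j => ∫ θ in (0:ℝ)..(2 * Real.pi), f θ i j

/-- The positive semidefinite square root of a positive semidefinite matrix
(the definition `Matrix.PosSemidef.sqrt` of the older Mathlib, since removed). -/
noncomputable def Matrix.PosSemidef.sqrt {n 𝕜 : Type*} [Fintype n] [DecidableEq n] [RCLike 𝕜]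
    {A : Matrix n n 𝕜} (hA : A.PosSemidef) : Matrix n n 𝕜 :=
  (hA.1.eigenvectorUnitary : Matrix n n 𝕜) *
    diagonal (((↑) : ℝ → 𝕜) ∘ (√·) ∘ hA.1.eigenvalues) *
    (star hA.1.eigenvectorUnitary : Matrix n n 𝕜)

/-- The spectral norm (operator 2-norm) of a complex matrix. -/
noncomputable def sNorm {p : ℕ} (M : Matrix (Fin p) (Fin p) ℂ) : ℝ :=
  ‖LinearMap.toContinuousLinearMap (Matrix.toEuclideanLin M)‖




open scoped Matrix.Norms.L2Operator

lemma mySqrt_psd {p : ℕ} {A : Matrix (Fin p) (Fin p) ℂ} (hA : A.PosSemidef) :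
    hA.sqrt.PosSemidef := by
  have hD : (diagonal (((↑) : ℝ → ℂ) ∘ (√·) ∘ hA.1.eigenvalues)).PosSemidef := by
    rw [posSemidef_diagonal_iff]
    intro i
    simp only [Function.comp_apply]
    exact_mod_cast Real.sqrt_nonneg _
  exact hD.mul_mul_conjTranspose_same (hA.1.eigenvectorUnitary : Matrix (Fin p) (Fin p) ℂ)

lemma mySqrt_mul_self {p : ℕ} {A : Matrix (Fin p) (Fin p) ℂ} (hA : A.PosSemidef) :
    hA.sqrt * hA.sqrt = A := by
  set U : Matrix (Fin p) (Fin p) ℂ := (hA.1.eigenvectorUnitary : Matrix (Fin p) (Fin p) ℂ)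
  set D1 : Matrix (Fin p) (Fin p) ℂ := diagonal (((↑) : ℝ → ℂ) ∘ (√·) ∘ hA.1.eigenvalues)
  have hUU : star U * U = 1 := Matrix.mem_unitaryGroup_iff'.mp hA.1.eigenvectorUnitary.2
  have hspec : A = U * diagonal (RCLike.ofReal ∘ hA.1.eigenvalues) * star U :=
    hA.1.spectral_theorem
  have hDD : D1 * D1 = diagonal (RCLike.ofReal ∘ hA.1.eigenvalues) := by
    rw [diagonal_mul_diagonal]
    congr 1
    funext i
    simp only [Function.comp_apply]
    rw [← Complex.ofReal_mul, Real.mul_self_sqrt (hA.eigenvalues_nonneg i)]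
    rfl
  show U * D1 * star U * (U * D1 * star U) = A
  calc U * D1 * star U * (U * D1 * star U) = U * D1 * (star U * U) * D1 * star U := by
        simp only [mul_assoc]
    _ = A := by rw [hUU, mul_one, mul_assoc U D1 D1, hDD, ← hspec]


-- Lemma B: diagonal norm bound
lemma myNorm_diagonal_le {p : ℕ} (d : Fin p → ℝ) (hd : ∀ i, 0 ≤ d i) :
    ‖(Matrix.diagonal (fun i => (d i : ℂ)) : Matrix (Fin p) (Fin p) ℂ)‖ ≤ ∑ i, d i := by
  set c : ℝ := ∑ i, d i with hc
  have hc0 : 0 ≤ c := Finset.sum_nonneg fun i _ => hd i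
  have hdc : ∀ i, d i ≤ c := fun i =>
    Finset.single_le_sum (fun j _ => hd j) (Finset.mem_univ i)
  rw [Matrix.l2_opNorm_def]
  refine ContinuousLinearMap.opNorm_le_bound _ hc0 fun x => ?_
  simp only [LinearEquiv.trans_apply, LinearMap.coe_toContinuousLinearMap']
  rw [EuclideanSpace.norm_eq, EuclideanSpace.norm_eq]
  rw [show (c : ℝ) = Real.sqrt (c ^ 2) from (Real.sqrt_sq hc0).symm,
    ← Real.sqrt_mul (by positivity)]
  apply Real.sqrt_le_sqrt
  rw [Finset.mul_sum]
  apply Finset.sum_le_sum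
  intro i _
  have happ : (Matrix.toEuclideanLin (Matrix.diagonal (fun i => (d i : ℂ))) x) i
      = (d i : ℂ) * (x i) := by
    rw [Matrix.toEuclideanLin_apply]
    simp [Matrix.mulVec_diagonal]
  rw [happ]
  rw [norm_mul]
  have : ‖((d i : ℂ))‖ = d i := by
    rw [Complex.norm_real, Real.norm_of_nonneg (hd i)]
  rw [this, mul_pow]
  gcongr
  exacts [hd i, hdc i]

-- Lemma A: norm ≤ trace.re for PSD
lemma myNorm_le_trace {p : ℕ} {M : Matrix (Fin p) (Fin p) ℂ} (hM : M.PosSemidef) :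
    ‖M‖ ≤ M.trace.re := by
  have hH := hM.1
  set U : Matrix (Fin p) (Fin p) ℂ := (hH.eigenvectorUnitary : Matrix (Fin p) (Fin p) ℂ)
  set D : Matrix (Fin p) (Fin p) ℂ := Matrix.diagonal (RCLike.ofReal ∘ hH.eigenvalues)
  have hspec : M = U * D * star U := hH.spectral_theorem
  have hU : (U : Matrix (Fin p) (Fin p) ℂ) ∈ unitary (Matrix (Fin p) (Fin p) ℂ) :=
    hH.eigenvectorUnitary.2
  have hnorm : ‖M‖ = ‖D‖ := by
    rw [hspec, CStarRing.norm_mul_mem_unitary _ (Unitary.star_mem hU),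
      CStarRing.norm_mem_unitary_mul _ hU]
  have htrace : M.trace = D.trace := by
    rw [hspec, Matrix.trace_mul_comm, ← mul_assoc,
       Matrix.mem_unitaryGroup_iff'.mp hU, one_mul]
  have htrD : D.trace.re = ∑ i, hH.eigenvalues i := by
    simp [D, Matrix.trace_diagonal, Complex.re_sum]
  rw [hnorm, htrace, htrD]
  exact myNorm_diagonal_le _ (fun i => hM.eigenvalues_nonneg i)

-- Lemma C : 2 Tr S ≤ p + Tr (S*S) for Hermitian S
lemma myTrace_sqrt_bound {p : ℕ} {S : Matrix (Fin p) (Fin p) ℂ} (hS : S.IsHermitian) :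
    2 * S.trace.re ≤ p + (S * S).trace.re := by
  have hdiag : ∀ i, ((S * S) i i).re = ∑ j, Complex.normSq (S j i) := by
    intro i
    have : (S * S) i i = ∑ j, S i j * S j i := by simp [Matrix.mul_apply]
    rw [this, Complex.re_sum]
    apply Finset.sum_congr rfl
    intro j _
    have hij : S i j = (starRingEnd ℂ) (S j i) := by
      conv_lhs => rw [← hS]
      simp [Matrix.conjTranspose_apply]
    rw [hij, ← Complex.normSq_eq_conj_mul_self]
    simp
  have htr : (S * S).trace.re = ∑ i, ∑ j, Complex.normSq (S j i) := by
    rw [Matrix.trace, Complex.re_sum]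
    exact Finset.sum_congr rfl fun i _ => hdiag i
  have htrS : S.trace.re = ∑ i, (S i i).re := by
    rw [Matrix.trace, Complex.re_sum]; rfl
  rw [htr, htrS, Finset.mul_sum]
  have hp : (p : ℝ) = ∑ _i : Fin p, (1 : ℝ) := by simp
  rw [hp, ← Finset.sum_add_distrib]
  apply Finset.sum_le_sum
  intro i _
  have h1 : Complex.normSq (S i i) ≤ ∑ j, Complex.normSq (S j i) :=
    Finset.single_le_sum (f := fun j => Complex.normSq (S j i))
      (fun j _ => Complex.normSq_nonneg _) (Finset.mem_univ i)
  have h2 : (S i i).re ^ 2 ≤ Complex.normSq (S i i) := by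
    rw [Complex.normSq_apply]; nlinarith [sq_nonneg (S i i).im]
  nlinarith [sq_nonneg ((S i i).re - 1)]

lemma sNorm_eq {p : ℕ} (M : Matrix (Fin p) (Fin p) ℂ) : sNorm M = ‖M‖ := rfl

-- Lemma D: pointwise bound
lemma myPointwise {p : ℕ} {A : Matrix (Fin p) (Fin p) ℂ} (hA : A.PosDef) :
    ‖A - 1‖ ≤ ‖hA.posSemidef.sqrt - 1‖ * Real.sqrt (2 * A.trace.re + 2 * p) := by
  set S := hA.posSemidef.sqrt with hSdef
  have hSps : S.PosSemidef := mySqrt_psd hA.posSemidef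
  have hmul : S * S = A := mySqrt_mul_self hA.posSemidef
  have hfac : A - 1 = (S - 1) * (S + 1) := by
    have h1 : (S - 1) * (S + 1) = S * S - 1 := by noncomm_ring
    rw [h1, hmul]
  have hstar : star (S + 1) = S + 1 := by
    have : star S = S := hSps.1
    simp [star_add, this]
  have hsq : ‖S + 1‖ ^ 2 = ‖(S + 1) * (S + 1)‖ := by
    conv_rhs => rw [show (S+1) * (S+1) = star (S+1) * (S+1) by rw [hstar]]
    rw [CStarRing.norm_star_mul_self, sq]
  have hPSD : ((S + 1) * (S + 1)).PosSemidef := by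
    rw [show (S+1) * (S+1) = (S+1)ᴴ * (S+1) from by
      rw [show (S+1)ᴴ = star (S+1) from rfl, hstar]]
    exact Matrix.posSemidef_conjTranspose_mul_self (S + 1)
  have htr2 : ((S + 1) * (S + 1)).trace.re ≤ 2 * A.trace.re + 2 * p := by
    have hexp : (S + 1) * (S + 1) = S * S + (S + S) + 1 := by noncomm_ring
    have h2 := myTrace_sqrt_bound hSps.1
    rw [hexp, hmul]
    simp only [Matrix.trace_add, Complex.add_re, Matrix.trace_one]
    rw [hmul] at h2
    simp only [Matrix.trace_add, Complex.add_re, Matrix.trace_one,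
      Fintype.card_fin, Complex.natCast_re] at *
    linarith
  have hn2 : ‖S + 1‖ ≤ Real.sqrt (2 * A.trace.re + 2 * p) := by
    rw [show Real.sqrt (2 * A.trace.re + 2 * p)
        = Real.sqrt (2 * A.trace.re + 2 * p) from rfl]
    have hle : ‖S + 1‖ ^ 2 ≤ 2 * A.trace.re + 2 * p := by
      rw [hsq]
      exact le_trans (myNorm_le_trace hPSD) htr2
    have := Real.sqrt_le_sqrt hle
    rwa [Real.sqrt_sq (norm_nonneg _)] at this
  calc ‖A - 1‖ = ‖(S - 1) * (S + 1)‖ := by rw [hfac]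
    _ ≤ ‖S - 1‖ * ‖S + 1‖ := norm_mul_le _ _
    _ ≤ ‖S - 1‖ * Real.sqrt (2 * A.trace.re + 2 * p) := by
        exact mul_le_mul_of_nonneg_left hn2 (norm_nonneg _)

lemma myTrace_nonneg {p : ℕ} {M : Matrix (Fin p) (Fin p) ℂ} (hM : M.PosSemidef) :
    0 ≤ M.trace.re :=
  le_trans (norm_nonneg M) (myNorm_le_trace hM)
/-- With
`A(θ) = φ_n(z) φ_{n+ℓ}(z)⁻¹ ([φ_{n+ℓ}(z)]*)⁻¹ [φ_n(z)]*`, `z = e^{iθ}`, positive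
definite, satisfying the finite orthogonality `∫₀^{2π} Tr(A) dθ = 2πp` and
`∫₀^{2π} Tr(A^{1/2}) dθ ≤ 2πp`, one has
`∫₀^{2π} ‖A - I‖₂ dθ ≤ (8πp)^{1/2} (∫₀^{2π} ‖A^{1/2} - I‖₂² dθ)^{1/2}`. -/
theorem integral_norm_A_minus_I_bound
    (p : ℕ) (n ℓ : ℕ) (hℓ : 1 ≤ ℓ)
    (φ : ℕ → ℂ → Matrix (Fin p) (Fin p) ℂ)
    (A : ℝ → Matrix (Fin p) (Fin p) ℂ)
    (hAdef : ∀ θ : ℝ, A θ =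
      φ n (Complex.exp (θ * Complex.I)) *
        (φ (n + ℓ) (Complex.exp (θ * Complex.I)))⁻¹ *
        ((φ (n + ℓ) (Complex.exp (θ * Complex.I)))ᴴ)⁻¹ *
        (φ n (Complex.exp (θ * Complex.I)))ᴴ)
    (hA : ∀ θ, (A θ).PosDef)
    (htr : ∫ θ in (0:ℝ)..(2 * Real.pi), ((A θ).trace).re = 2 * Real.pi * p)
    (htrsqrt : ∫ θ in (0:ℝ)..(2 * Real.pi), ((((hA θ).posSemidef).sqrt).trace).re
      ≤ 2 * Real.pi * p)
    (hint1 : IntervalIntegrable (fun θ => sNorm (A θ - 1))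
      MeasureTheory.volume 0 (2 * Real.pi))
    (hint2 : IntervalIntegrable (fun θ => sNorm (((hA θ).posSemidef).sqrt - 1) ^ 2)
      MeasureTheory.volume 0 (2 * Real.pi)) :
    ∫ θ in (0:ℝ)..(2 * Real.pi), sNorm (A θ - 1) ≤
      Real.sqrt (8 * Real.pi * p) *
        Real.sqrt (∫ θ in (0:ℝ)..(2 * Real.pi),
          sNorm (((hA θ).posSemidef).sqrt - 1) ^ 2) := by
  rcases Nat.eq_zero_or_pos p with hp | hp
  · subst hp
    have hzero : ∀ θ : ℝ, sNorm (A θ - 1) = 0 := by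
      intro θ
      have h0 : A θ - 1 = 0 := Subsingleton.elim _ _
      rw [h0, sNorm_eq, norm_zero]
    simp only [hzero]
    rw [intervalIntegral.integral_zero]
    positivity
  ·
    have hπ := Real.pi_pos
    have h02 : (0:ℝ) ≤ 2 * Real.pi := by positivity
    set s : Set ℝ := Set.Ioc 0 (2 * Real.pi) with hs
    set μ := MeasureTheory.volume.restrict s with hμ
    set f : ℝ → ℝ := fun θ => sNorm (((hA θ).posSemidef).sqrt - 1) with hfdef
    set g : ℝ → ℝ := fun θ => Real.sqrt (2 * ((A θ).trace).re + 2 * p) with hgdef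
    -- convert interval integrals to set integrals
    rw [intervalIntegral.integral_of_le h02] at htr ⊢
    rw [intervalIntegral.integral_of_le h02]
    have hint1' : Integrable (fun θ => sNorm (A θ - 1)) μ :=
      (intervalIntegrable_iff_integrableOn_Ioc_of_le h02).mp hint1
    have hint2' : Integrable (fun θ => f θ ^ 2) μ :=
      (intervalIntegrable_iff_integrableOn_Ioc_of_le h02).mp hint2
    have hfnn : ∀ θ, 0 ≤ f θ := fun θ => norm_nonneg _
    have hgnn : ∀ θ, 0 ≤ g θ := fun θ => Real.sqrt_nonneg _
    have htrnn : ∀ θ, 0 ≤ ((A θ).trace).re := fun θ => myTrace_nonneg (hA θ).posSemidef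
    have hginn : ∀ θ, (0:ℝ) ≤ 2 * ((A θ).trace).re + 2 * p := by
      intro θ; have := htrnn θ; positivity
    have hgsq : ∀ θ, g θ ^ 2 = 2 * ((A θ).trace).re + 2 * p := fun θ =>
      Real.sq_sqrt (hginn θ)
    -- trace is integrable
    have hTrInt : Integrable (fun θ => ((A θ).trace).re) μ := by
      by_contra hcon
      rw [MeasureTheory.integral_undef hcon] at htr
      have : (0:ℝ) < 2 * Real.pi * p := by positivity
      linarith [htr ▸ this]
    -- measurability
    have hfm : AEStronglyMeasurable f μ := by
      have h1 : AEStronglyMeasurable (fun θ => Real.sqrt (f θ ^ 2)) μ :=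
        Real.continuous_sqrt.comp_aestronglyMeasurable hint2'.aestronglyMeasurable
      have h2 : (fun θ => Real.sqrt (f θ ^ 2)) = f :=
        funext fun θ => Real.sqrt_sq (hfnn θ)
      rwa [h2] at h1
    have hinm : AEStronglyMeasurable (fun θ => 2 * ((A θ).trace).re + 2 * (p:ℝ)) μ :=
      (hTrInt.aestronglyMeasurable.const_mul 2).add aestronglyMeasurable_const
    have hgm : AEStronglyMeasurable g μ :=
      Real.continuous_sqrt.comp_aestronglyMeasurable hinm
    have hconst_int : Integrable (fun _ : ℝ => 2 * (p:ℝ)) μ := by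
      refine MeasureTheory.integrableOn_const ?_
      rw [Real.volume_Ioc]
      exact ENNReal.ofReal_ne_top
    have hg2int : Integrable (fun θ => g θ ^ 2) μ := by
      have : Integrable (fun θ => 2 * ((A θ).trace).re + 2 * (p:ℝ)) μ :=
        (hTrInt.const_mul 2).add hconst_int
      exact this.congr (Filter.Eventually.of_forall fun θ => (hgsq θ).symm)
    have hfL2 : MemLp f 2 μ := (memLp_two_iff_integrable_sq hfm).mpr hint2'
    have hgL2 : MemLp g 2 μ := (memLp_two_iff_integrable_sq hgm).mpr hg2int
    have hfg_int : Integrable (fun θ => f θ * g θ) μ := by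
      refine Integrable.mono' ((hint2'.add hg2int).div_const 2) (hfm.mul hgm) ?_
      refine Filter.Eventually.of_forall fun θ => ?_
      rw [Real.norm_of_nonneg (mul_nonneg (hfnn θ) (hgnn θ))]
      simp only [Pi.add_apply]
      nlinarith [sq_nonneg (f θ - g θ)]
    -- pointwise bound and Hölder
    have hpt : ∀ θ, sNorm (A θ - 1) ≤ f θ * g θ := by
      intro θ
      simpa [sNorm_eq, hgdef, hfdef] using myPointwise (hA θ)
    have step1 : ∫ θ in s, sNorm (A θ - 1) ≤ ∫ θ in s, f θ * g θ :=
      MeasureTheory.integral_mono hint1' hfg_int hpt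
    have hpq : Real.HolderConjugate 2 2 := Real.HolderConjugate.two_two
    have h2e : (ENNReal.ofReal (2:ℝ)) = 2 := by
      simp [ENNReal.ofReal_ofNat]
    have step2 : ∫ θ in s, f θ * g θ ≤
        (∫ θ in s, f θ ^ (2:ℝ)) ^ ((1:ℝ)/2) * (∫ θ in s, g θ ^ (2:ℝ)) ^ ((1:ℝ)/2) :=
      MeasureTheory.integral_mul_le_Lp_mul_Lq_of_nonneg hpq
        (Filter.Eventually.of_forall hfnn) (Filter.Eventually.of_forall hgnn)
        (h2e ▸ hfL2) (h2e ▸ hgL2)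
    have hrpow : ∀ (h : ℝ → ℝ), (fun θ => h θ ^ (2:ℝ)) = fun θ => h θ ^ (2:ℕ) := by
      intro h; funext θ
      rw [show (2:ℝ) = ((2:ℕ):ℝ) by norm_num, Real.rpow_natCast]
    have hg2val : ∫ θ in s, g θ ^ 2 = 8 * Real.pi * p := by
      have hcongr : ∫ θ in s, g θ ^ 2 = ∫ θ in s, (2 * ((A θ).trace).re + 2 * (p:ℝ)) :=
        MeasureTheory.integral_congr_ae (Filter.Eventually.of_forall fun θ => hgsq θ)
      rw [hcongr, MeasureTheory.integral_add (hTrInt.const_mul 2) hconst_int,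
        MeasureTheory.integral_const_mul, htr, MeasureTheory.integral_const]
      rw [hμ, MeasureTheory.measureReal_def, MeasureTheory.Measure.restrict_apply_univ, hs, Real.volume_Ioc,
        smul_eq_mul]
      rw [show (2 * Real.pi - 0 : ℝ) = 2 * Real.pi by ring, ENNReal.toReal_ofReal h02]
      ring
    calc ∫ θ in s, sNorm (A θ - 1) ≤ ∫ θ in s, f θ * g θ := step1
      _ ≤ (∫ θ in s, f θ ^ (2:ℝ)) ^ ((1:ℝ)/2) * (∫ θ in s, g θ ^ (2:ℝ)) ^ ((1:ℝ)/2) := step2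
      _ = Real.sqrt (∫ θ in s, f θ ^ 2) * Real.sqrt (∫ θ in s, g θ ^ 2) := by
          rw [hrpow f, hrpow g, ← Real.sqrt_eq_rpow, ← Real.sqrt_eq_rpow]
      _ = Real.sqrt (8 * Real.pi * p) * Real.sqrt (∫ θ in s, f θ ^ 2) := by
          rw [hg2val, mul_comm]
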